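/- arXiv:1711.08187 — 2 statements merged into one kernel-verified Lean document; each statement's English description precedes it below -/
import Mathlib

section
/- If y solves (p y')' = q f(x, y, y') on (0,1] with y(0⁺) = η₁, and the integrals below converge, then y satisfies the integral equation y(x) = η₁ + c₁ ∫₀ˣ ds/p(s) − ∫₀ˣ (1/p(s)) ∫ₛ¹ q(t) f(t, y(t), y'(t)) dt ds, where c₁ = p(1) y'(1). -/
/-!
Integrating the equation from `s` to `1` expresses the flux `p y'` through its value at `1`:
`p(s) y'(s) = c₁ - ∫ₛ¹ q f`, so `y' = c₁ / p - (1 / p) ∫ₛ¹ q f` is integrable on `(0, 1]`.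
The fundamental theorem of calculus on `(0, x]`, with `y(0⁺) = η₁` supplying the value at the
open endpoint, then gives the integral equation.
-/

open MeasureTheory intervalIntegral Set Filter

theorem integral_rhs_eq_flux_sub {p q y : ℝ → ℝ} {f : ℝ → ℝ → ℝ → ℝ} {a b s : ℝ}
    (hp : ContDiffOn ℝ 1 p (Ioc a b))
    (hq : IntegrableOn q (Ioc a b))
    (hf : Continuous fun v : ℝ × ℝ × ℝ => f v.1 v.2.1 v.2.2)
    (hy : ∀ x ∈ Ioc a b, DifferentiableAt ℝ y x ∧ DifferentiableAt ℝ (deriv y) x)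
    (hode : ∀ x ∈ Ioo a b,
      deriv (fun u => p u * deriv y u) x = q x * f x (y x) (deriv y x))
    (hs : s ∈ Ioc a b) :
    ∫ t in s..b, q t * f t (y t) (deriv y t) = p b * deriv y b - p s * deriv y s := by
  have hsub : Icc s b ⊆ Ioc a b := fun u hu => ⟨hs.1.trans_le hu.1, hu.2⟩
  have hy_cont : ContinuousOn y (Ioc a b) :=
    fun t ht => (hy t ht).1.continuousAt.continuousWithinAt
  have hy'_cont : ContinuousOn (deriv y) (Ioc a b) :=
    fun t ht => (hy t ht).2.continuousAt.continuousWithinAt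
  have hjet : ContinuousOn (fun t => f t (y t) (deriv y t)) (Ioc a b) :=
    hf.comp_continuousOn (continuousOn_id.prodMk (hy_cont.prodMk hy'_cont))
  refine integral_eq_sub_of_hasDerivAt_of_le hs.2
    ((hp.continuousOn.mul hy'_cont).mono hsub) (fun t ht => ?_) ?_
  · have ht' : t ∈ Ioo a b := ⟨hs.1.trans ht.1, ht.2⟩
    have hpt : DifferentiableAt ℝ p t :=
      (hp.differentiableOn one_ne_zero).differentiableAt (Ioc_mem_nhds ht'.1 ht'.2)
    rw [← hode t ht']
    exact (hpt.mul (hy t (Ioo_subset_Ioc_self ht')).2).hasDerivAt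
  · rw [intervalIntegrable_iff_integrableOn_Icc_of_le hs.2]
    exact (hq.mono_set hsub).mul_continuousOn_of_subset (hjet.mono hsub) measurableSet_Icc
      isCompact_Icc le_rfl

/-- A solution of (p y')' = q f(x,y,y') with y(0⁺) = η₁ satisfies the integral equation
    y(x) = η₁ + c₁ ∫₀ˣ ds/p(s) − ∫₀ˣ (1/p(s)) ∫ₛ¹ q f dt ds, where c₁ = p(1) y'(1). -/
theorem stmt_6 (p q y : ℝ → ℝ) (f : ℝ → ℝ → ℝ → ℝ) (η₁ : ℝ)
    (hp : ContDiffOn ℝ 1 p (Set.Ioc 0 1))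
    (hp0 : ∀ s ∈ Set.Ioc (0:ℝ) 1, p s ≠ 0)
    (hq : IntegrableOn q (Set.Ioc 0 1))
    (hf : Continuous fun v : ℝ × ℝ × ℝ => f v.1 v.2.1 v.2.2)
    (hy : ∀ x ∈ Set.Ioc (0:ℝ) 1, DifferentiableAt ℝ y x ∧ DifferentiableAt ℝ (deriv y) x)
    (hode : ∀ x ∈ Set.Ioc (0:ℝ) 1,
      deriv (fun u => p u * deriv y u) x = q x * f x (y x) (deriv y x))
    (hpint : IntegrableOn (fun s => 1 / p s) (Set.Ioc 0 1))
    (hLint : IntegrableOn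
      (fun s => (1 / p s) * ∫ t in s..1, q t * f t (y t) (deriv y t)) (Set.Ioc 0 1))
    (hlim : Filter.Tendsto y (nhdsWithin 0 (Set.Ioi 0)) (nhds η₁)) :
    ∀ x ∈ Set.Ioc (0:ℝ) 1,
      y x = η₁ + p 1 * deriv y 1 * (∫ s in (0:ℝ)..x, 1 / p s)
        - ∫ s in (0:ℝ)..x, (1 / p s) * ∫ t in s..1, q t * f t (y t) (deriv y t) := by
  intro x hx
  set c₁ := p 1 * deriv y 1
  set L := fun s => (1 / p s) * ∫ t in s..1, q t * f t (y t) (deriv y t)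
  have hy' : ∀ s ∈ Ioc (0:ℝ) 1, deriv y s = c₁ * (1 / p s) - L s := fun s hs => by
    have hflux := integral_rhs_eq_flux_sub hp hq hf hy
      (fun t ht => hode t (Ioo_subset_Ioc_self ht)) hs
    simp only [L, hflux]
    field_simp [hp0 s hs]
    ring
  have hsub : Ioc 0 x ⊆ Ioc (0:ℝ) 1 := fun u hu => ⟨hu.1, hu.2.trans hx.2⟩
  have hpint_x : IntervalIntegrable (fun s => 1 / p s) volume 0 x :=
    (intervalIntegrable_iff_integrableOn_Ioc_of_le hx.1.le).2 (hpint.mono_set hsub)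
  have hLint_x : IntervalIntegrable L volume 0 x :=
    (intervalIntegrable_iff_integrableOn_Ioc_of_le hx.1.le).2 (hLint.mono_set hsub)
  have hFTC := integral_eq_sub_of_hasDerivAt_of_tendsto hx.1
    (fun t ht => hy' t (hsub (Ioo_subset_Ioc_self ht)) ▸
      (hy t (hsub (Ioo_subset_Ioc_self ht))).1.hasDerivAt)
    ((hpint_x.const_mul c₁).sub hLint_x) hlim
    ((hy x hx).1.continuousAt.tendsto.mono_left nhdsWithin_le_nhds)
  rw [intervalIntegral.integral_sub (hpint_x.const_mul c₁) hLint_x,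
    intervalIntegral.integral_const_mul] at hFTC
  linarith
end

section
/- If y is a solution on (0,1] of (p y')' = q f(x,y,y') satisfying y(0⁺) = η₁ and α₁ y(1) + β₁ y'(1) = γ₁ with α₁ h(1) + β₁ h'(1) ≠ 0, where h(x) = ∫₀ˣ ds/p(s), then y satisfies y(x) = η₁ + (γ₁ − α₁ η₁) h(x)/(α₁ h(1) + β₁ h'(1)) + α₁ h(x)/(α₁ h(1) + β₁ h'(1)) · [L^{-1}(q f)]_{x=1} − L^{-1}(q f)(x), where L^{-1}g(x) = ∫₀ˣ (1/p(s)) ∫ₛ¹ g dt ds. -/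
/-!
Integrating `(p y')' = q f` from `x` to `1` gives `p y' = C - ∫ₓ¹ q f` with `C = p(1) y'(1)`.
Dividing by `p` and integrating from `0⁺`, where `y → η₁`, yields `y = η₁ + C h - L⁻¹(q f)`.
The boundary condition at `1` is then linear in `C` with coefficient `α₁ h(1) + β₁ h'(1)`.
-/

open MeasureTheory intervalIntegral Set Filter Topology

theorem eq_add_integral_of_hasDerivAt_of_tendsto_nhdsGT
    {E : Type*} [NormedAddCommGroup E] [NormedSpace ℝ E] [CompleteSpace E]
    {f f' : ℝ → E} {a b : ℝ} {c : E} (hab : a < b)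
    (hderiv : ∀ x ∈ Ioc a b, HasDerivAt f (f' x) x) (hint : IntegrableOn f' (Ioc a b))
    (hlim : Tendsto f (𝓝[>] a) (𝓝 c)) :
    f b = c + ∫ x in a..b, f' x := by
  have hint' : IntegrableOn f' (uIcc a b) := by
    rwa [uIcc_of_le hab.le, integrableOn_Icc_iff_integrableOn_Ioc]
  have hftc : ∀ t ∈ Ioc a b, f t = f b - ∫ x in t..b, f' x := by
    intro t ht
    have hsub : uIcc t b ⊆ Ioc a b := by
      rw [uIcc_of_le ht.2]; exact fun u hu => ⟨ht.1.trans_le hu.1, hu.2⟩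
    rw [integral_eq_sub_of_hasDerivAt (fun u hu => hderiv u (hsub hu))
      ((hint.mono_set hsub).intervalIntegrable), sub_sub_cancel]
  have htail : Tendsto (fun t => ∫ x in t..b, f' x) (𝓝[>] a) (𝓝 (∫ x in a..b, f' x)) := by
    have hcont := continuousOn_primitive_interval_left hint'
    rw [uIcc_of_le hab.le] at hcont
    exact (hcont a (left_mem_Icc.2 hab.le)).tendsto.mono_left <|
      (nhdsWithin_Ioc_eq_nhdsGT hab).symm.trans_le
      (nhdsWithin_mono _ Ioc_subset_Icc_self)
  have hlim' : Tendsto f (𝓝[>] a) (𝓝 (f b - ∫ x in a..b, f' x)) :=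
    (tendsto_const_nhds.sub htail).congr'
      (eventuallyEq_of_mem (Ioc_mem_nhdsGT hab) fun t ht => (hftc t ht).symm)
  rw [tendsto_nhds_unique hlim hlim', sub_add_cancel]

theorem deriv_eq_of_hasDerivAt_mul_deriv {p y g : ℝ → ℝ} {a b : ℝ} (hab : a ≤ b)
    (hcont : ContinuousOn (fun u => p u * deriv y u) (Icc a b))
    (hderiv : ∀ u ∈ Ioo a b, HasDerivAt (fun u => p u * deriv y u) (g u) u)
    (hg : IntervalIntegrable g volume a b) (hpa : p a ≠ 0) :
    deriv y a = p b * deriv y b * (1 / p a) - 1 / p a * ∫ t in a..b, g t := by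
  rw [integral_eq_sub_of_hasDerivAt_of_le hab hcont hderiv hg]
  field_simp
  ring

theorem deriv_eq_of_deriv_mul_deriv_eq {p y g : ℝ → ℝ} {a b : ℝ}
    (hp : ContDiffOn ℝ 1 p (Ioc a b)) (hp0 : ∀ u ∈ Ioc a b, p u ≠ 0)
    (hy' : ∀ u ∈ Ioc a b, DifferentiableAt ℝ (deriv y) u)
    (hode : ∀ u ∈ Ioc a b, deriv (fun u => p u * deriv y u) u = g u)
    (hg : ∀ c ∈ Ioc a b, IntervalIntegrable g volume c b) :
    ∀ u ∈ Ioc a b, deriv y u = p b * deriv y b * (1 / p u) - 1 / p u * ∫ t in u..b, g t := by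
  have hcont : ContinuousOn (fun u => p u * deriv y u) (Ioc a b) :=
    hp.continuousOn.mul fun u hu => (hy' u hu).continuousAt.continuousWithinAt
  have hderiv : ∀ u ∈ Ioo a b, HasDerivAt (fun u => p u * deriv y u) (g u) u := by
    intro u hu
    have hpu : DifferentiableAt ℝ p u :=
      (hp.differentiableOn one_ne_zero u (Ioo_subset_Ioc_self hu)).differentiableAt
        (mem_of_superset (Ioo_mem_nhds hu.1 hu.2) Ioo_subset_Ioc_self)
    exact (hpu.mul (hy' u (Ioo_subset_Ioc_self hu))).hasDerivAt.congr_deriv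
      (hode u (Ioo_subset_Ioc_self hu))
  intro u hu
  exact deriv_eq_of_hasDerivAt_mul_deriv hu.2
    (hcont.mono fun v hv => ⟨hu.1.trans_le hv.1, hv.2⟩)
    (fun v hv => hderiv v ⟨hu.1.trans hv.1, hv.2⟩) (hg u hu) (hp0 u hu)

theorem stmt_11_general (p q y : ℝ → ℝ) (f : ℝ → ℝ → ℝ → ℝ) (η₁ α₁ β₁ γ₁ : ℝ)
    (hp : ContDiffOn ℝ 1 p (Set.Ioc 0 1))
    (hp0 : ∀ s ∈ Set.Ioc (0:ℝ) 1, p s ≠ 0)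
    (hq : IntegrableOn q (Set.Ioc 0 1))
    (hf : Continuous fun v : ℝ × ℝ × ℝ => f v.1 v.2.1 v.2.2)
    (hpint : IntegrableOn (fun s => 1 / p s) (Set.Ioc 0 1))
    (hden : α₁ * (∫ s in (0:ℝ)..1, 1 / p s) + β₁ * (1 / p 1) ≠ 0)
    (hy : ∀ x ∈ Set.Ioc (0:ℝ) 1, DifferentiableAt ℝ y x ∧ DifferentiableAt ℝ (deriv y) x)
    (hode : ∀ x ∈ Set.Ioc (0:ℝ) 1,
      deriv (fun u => p u * deriv y u) x = q x * f x (y x) (deriv y x))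
    (hbc : α₁ * y 1 + β₁ * deriv y 1 = γ₁)
    (hlim : Filter.Tendsto y (nhdsWithin 0 (Set.Ioi 0)) (nhds η₁))
    (hLint : IntegrableOn
      (fun s => (1 / p s) * ∫ t in s..1, q t * f t (y t) (deriv y t)) (Set.Ioc 0 1)) :
    ∀ x ∈ Set.Ioc (0:ℝ) 1,
      y x = η₁
        + (γ₁ - α₁ * η₁) * (∫ s in (0:ℝ)..x, 1 / p s)
            / (α₁ * (∫ s in (0:ℝ)..1, 1 / p s) + β₁ * (1 / p 1))
        + α₁ * (∫ s in (0:ℝ)..x, 1 / p s)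
            / (α₁ * (∫ s in (0:ℝ)..1, 1 / p s) + β₁ * (1 / p 1))
            * (∫ s in (0:ℝ)..1, (1 / p s) * ∫ t in s..1, q t * f t (y t) (deriv y t))
        - ∫ s in (0:ℝ)..x, (1 / p s) * ∫ t in s..1, q t * f t (y t) (deriv y t) := by
  set g : ℝ → ℝ := fun t => q t * f t (y t) (deriv y t)
  set G : ℝ → ℝ := fun s => (1 / p s) * ∫ t in s..1, g t
  set C := p 1 * deriv y 1
  have hg : ∀ a ∈ Ioc (0:ℝ) 1, IntervalIntegrable g volume a 1 := by
    intro a ha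
    have hF : ContinuousOn (fun t => f t (y t) (deriv y t)) (Ioc 0 1) := fun u hu =>
      (hf.continuousAt.comp (continuousAt_id.prodMk
        ((hy u hu).1.continuousAt.prodMk (hy u hu).2.continuousAt))).continuousWithinAt
    have hs : uIcc a 1 ⊆ Ioc 0 1 := by
      rw [uIcc_of_le ha.2]; exact fun u hu => ⟨ha.1.trans_le hu.1, hu.2⟩
    exact (hq.mono_set hs).intervalIntegrable.mul_continuousOn (hF.mono hs)
  have hy' : ∀ u ∈ Ioc (0:ℝ) 1, deriv y u = C * (1 / p u) - G u :=
    deriv_eq_of_deriv_mul_deriv_eq hp hp0 (fun u hu => (hy u hu).2) hode hg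
  have hrep : ∀ x ∈ Ioc (0:ℝ) 1,
      y x = η₁ + C * (∫ s in (0:ℝ)..x, 1 / p s) - ∫ s in (0:ℝ)..x, G s := by
    intro x hx
    have hsubx : Ioc 0 x ⊆ Ioc (0:ℝ) 1 := Ioc_subset_Ioc_right hx.2
    have hii : ∀ {φ : ℝ → ℝ}, IntegrableOn φ (Ioc 0 1) → IntervalIntegrable φ volume 0 x :=
      fun h => (intervalIntegrable_iff_integrableOn_Ioc_of_le hx.1.le).2 (h.mono_set hsubx)
    rw [eq_add_integral_of_hasDerivAt_of_tendsto_nhdsGT hx.1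
      (fun u hu => (hy u (hsubx hu)).1.hasDerivAt.congr_deriv (hy' u (hsubx hu)))
      (IntegrableOn.mono_set ((hpint.const_mul C).sub hLint) hsubx) hlim,
      integral_sub ((hii hpint).const_mul C) (hii hLint),
      intervalIntegral.integral_const_mul, add_sub_assoc]
  have h1 : (1:ℝ) ∈ Ioc 0 1 := right_mem_Ioc.2 one_pos
  have hC : C = (γ₁ - α₁ * η₁ + α₁ * ∫ s in (0:ℝ)..1, G s) /
      (α₁ * (∫ s in (0:ℝ)..1, 1 / p s) + β₁ * (1 / p 1)) := by
    have hy'1 : deriv y 1 = C * (1 / p 1) := by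
      simp only [C]; field_simp [hp0 1 h1]
    rw [eq_div_iff hden, ← hbc, hrep 1 h1, hy'1]
    ring
  intro x hx
  rw [hrep x hx, hC]
  ring

/-- Integral equation for the mixed boundary value problem
    (p y')' = q f(x,y,y'), y(0⁺) = η₁, α₁ y(1) + β₁ y'(1) = γ₁. -/
theorem stmt_11 (p q y : ℝ → ℝ) (f : ℝ → ℝ → ℝ → ℝ) (η₁ α₁ β₁ γ₁ : ℝ)
    (hp : ContDiffOn ℝ 1 p (Set.Ioc 0 1))
    (hp0 : ∀ s ∈ Set.Ioc (0:ℝ) 1, p s ≠ 0)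
    (hq : IntegrableOn q (Set.Ioc 0 1))
    (hf : Continuous fun v : ℝ × ℝ × ℝ => f v.1 v.2.1 v.2.2)
    (hα₁ : 0 < α₁) (hβ₁ : 0 ≤ β₁)
    (hpint : IntegrableOn (fun s => 1 / p s) (Set.Ioc 0 1))
    (hden : α₁ * (∫ s in (0:ℝ)..1, 1 / p s) + β₁ * (1 / p 1) ≠ 0)
    (hy : ∀ x ∈ Set.Ioc (0:ℝ) 1, DifferentiableAt ℝ y x ∧ DifferentiableAt ℝ (deriv y) x)
    (hode : ∀ x ∈ Set.Ioc (0:ℝ) 1,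
      deriv (fun u => p u * deriv y u) x = q x * f x (y x) (deriv y x))
    (hbc : α₁ * y 1 + β₁ * deriv y 1 = γ₁)
    (hlim : Filter.Tendsto y (nhdsWithin 0 (Set.Ioi 0)) (nhds η₁))
    (hLint : IntegrableOn
      (fun s => (1 / p s) * ∫ t in s..1, q t * f t (y t) (deriv y t)) (Set.Ioc 0 1)) :
    ∀ x ∈ Set.Ioc (0:ℝ) 1,
      y x = η₁
        + (γ₁ - α₁ * η₁) * (∫ s in (0:ℝ)..x, 1 / p s)
            / (α₁ * (∫ s in (0:ℝ)..1, 1 / p s) + β₁ * (1 / p 1))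
        + α₁ * (∫ s in (0:ℝ)..x, 1 / p s)
            / (α₁ * (∫ s in (0:ℝ)..1, 1 / p s) + β₁ * (1 / p 1))
            * (∫ s in (0:ℝ)..1, (1 / p s) * ∫ t in s..1, q t * f t (y t) (deriv y t))
        - ∫ s in (0:ℝ)..x, (1 / p s) * ∫ t in s..1, q t * f t (y t) (deriv y t) :=
  stmt_11_general p q y f η₁ α₁ β₁ γ₁ hp hp0 hq hf hpint hden hy hode hbc hlim hLint
end
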